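/- Suppose the adversarial channel W_{Y|X,S} is U-overwritable via P_{S|X',Z}, and consider any (M,n) authentication code with possibly stochastic encoder F and decoder φ. Define the adversary strategy J̃(s̄|z̄) = (1/M)·∑_{j=1}^{M} E_{X'|j}[P_{S|X',Z}(s̄ | X', z̄)] (applied memorylessly per coordinate over the product channels). Then the average error probability satisfies e(J̃) ≥ ((M−1)/M)·(1 − e(J_{s₀})), where e(J_{s₀}) is the average non-adversarial decoding error probability. -/

import Mathlib

/-! The adversary draws a fake message `j` uniformly, a codeword `x'` from the encoder for `j`,
and feeds its observation `z⃗` letter by letter through `P_{S|X',Z}`. Overwritability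
tensorizes over the `n` letters, so the receiver then sees exactly the adversary-free output
of `x'`, whatever the true codeword was. When `j ≠ i` and that output decodes correctly to
`j`, the decoder commits an undetected substitution; averaging over `i` and `j` gives
`(M-1)/M` times the average success probability `1 - e(J_{s₀})`. -/

open scoped BigOperators

section Stmt18

variable {X Y S Z : Type*}

/-- A channel: nonnegative entries, rows summing to 1. -/
def IsChannel {A B : Type*} [Fintype B] (P : A → B → ℝ) : Prop :=
  (∀ a b, 0 ≤ P a b) ∧ ∀ a, ∑ b, P a b = 1

variable [Fintype X] [Fintype Y] [Fintype S] [Fintype Z]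
variable [DecidableEq Y] [DecidableEq S]

/-- Probability, under the product channel `Wⁿ(·|x⃗,s⃗)`, of the output landing in
the finite set `A`. -/
def Wn (W : X → S → Y → ℝ) {n : ℕ} (xv : Fin n → X) (sv : Fin n → S)
    (A : Finset (Fin n → Y)) : ℝ :=
  ∑ yv ∈ A, ∏ k, W (xv k) (sv k) (yv k)

/-- The error probability `e(i,J)` of an authentication code `(F, φ)` when message
`i` is sent and the myopic adversary (observing through the product of `U`) uses
strategy `J`: a decoding error occurs in the no-adversary state `s₀ⁿ` when the
output is not `i`, and under any other state when the output is not in `{i, 0}`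
(`0`, the declaration of adversarial interference, is encoded as `none`). -/
def errProb (W : X → S → Y → ℝ) (U : X → Z → ℝ) (s₀ : S) {M n : ℕ}
    (F : Fin M → (Fin n → X) → ℝ) (φ : (Fin n → Y) → Option (Fin M))
    (J : (Fin n → Z) → (Fin n → S) → ℝ) (i : Fin M) : ℝ :=
  ∑ xv, F i xv * ∑ zv, (∏ k, U (xv k) (zv k)) *
    (J zv (fun _ => s₀) *
        Wn W xv (fun _ => s₀) (Finset.univ.filter fun yv => φ yv ≠ some i)
      + ∑ sv ∈ Finset.univ.filter fun sv => sv ≠ (fun _ => s₀),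
          J zv sv *
            Wn W xv sv (Finset.univ.filter fun yv => φ yv ≠ some i ∧ φ yv ≠ none))

/-- Average error probability `e(J)` over a uniform message. -/
noncomputable def errAvg (W : X → S → Y → ℝ) (U : X → Z → ℝ) (s₀ : S) {M n : ℕ}
    (F : Fin M → (Fin n → X) → ℝ) (φ : (Fin n → Y) → Option (Fin M))
    (J : (Fin n → Z) → (Fin n → S) → ℝ) : ℝ :=
  (1 / M) * ∑ i, errProb W U s₀ F φ J i

/-- Average non-adversarial decoding error probability `e(J_{s₀})`. -/
noncomputable def errAvg0 (W : X → S → Y → ℝ) (s₀ : S) {M n : ℕ}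
    (F : Fin M → (Fin n → X) → ℝ) (φ : (Fin n → Y) → Option (Fin M)) : ℝ :=
  (1 / M) * ∑ i, ∑ xv, F i xv *
    Wn W xv (fun _ => s₀) (Finset.univ.filter fun yv => φ yv ≠ some i)

end Stmt18

open Finset

def IsOverwritable {X Y S Z : Type*} [Fintype S] [Fintype Z] (W : X → S → Y → ℝ)
    (U : X → Z → ℝ) (P : X → Z → S → ℝ) (s₀ : S) : Prop :=
  ∀ x x' y, ∑ s, ∑ z, U x z * P x' z s * W x s y = W x' s₀ y

namespace IsOverwritable

variable {X Y S Z : Type*} [Fintype S] [Fintype Z]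
  {W : X → S → Y → ℝ} {U : X → Z → ℝ} {P : X → Z → S → ℝ} {s₀ : S}

theorem pi (h : IsOverwritable W U P s₀) (n : ℕ) :
    IsOverwritable (fun (xv : Fin n → X) (sv : Fin n → S) (yv : Fin n → Y) =>
        ∏ k, W (xv k) (sv k) (yv k))
      (fun xv (zv : Fin n → Z) => ∏ k, U (xv k) (zv k))
      (fun xv' zv sv => ∏ k, P (xv' k) (zv k) (sv k)) (fun _ => s₀) := by
  intro xv xv' yv
  dsimp only
  simp only [← prod_mul_distrib]
  rw [sum_congr rfl fun sv _ => (Fintype.prod_sum fun k z =>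
      U (xv k) z * P (xv' k) z (sv k) * W (xv k) (sv k) (yv k)).symm,
    ← Fintype.prod_sum fun k s => ∑ z, U (xv k) z * P (xv' k) z s * W (xv k) s (yv k)]
  exact prod_congr rfl fun k _ => h _ _ _

theorem sum_finset (h : IsOverwritable W U P s₀) (x x' : X) (A : Finset Y) :
    ∑ s, ∑ z, U x z * P x' z s * ∑ y ∈ A, W x s y = ∑ y ∈ A, W x' s₀ y := by
  simp only [← h x x', mul_sum]
  exact sum_comm_cycle

theorem sum_mixture [Fintype X] (h : IsOverwritable W U P s₀) (x : X) (q : X → ℝ)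
    (A : Finset Y) :
    ∑ z, U x z * ∑ s, (∑ x', q x' * P x' z s) * ∑ y ∈ A, W x s y
      = ∑ x', q x' * ∑ y ∈ A, W x' s₀ y := by
  have fubini (g : S → ℝ) : ∑ z, U x z * ∑ s, (∑ x', q x' * P x' z s) * g s
      = ∑ x', q x' * ∑ s, ∑ z, U x z * P x' z s * g s := by
    simp only [mul_sum, sum_mul]
    rw [sum_comm_cycle]
    refine sum_congr rfl fun x' _ => ?_
    rw [sum_comm]
    exact sum_congr rfl fun s _ => sum_congr rfl fun z _ => by ring
  simp only [fubini, h.sum_finset]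

end IsOverwritable

section ProductChannel

variable {X Y S : Type*} {n : ℕ} {W : X → S → Y → ℝ}

theorem Wn_nonneg (hW : ∀ x s y, 0 ≤ W x s y) (xv : Fin n → X) (sv : Fin n → S)
    (A : Finset (Fin n → Y)) : 0 ≤ Wn W xv sv A :=
  sum_nonneg fun _ _ => prod_nonneg fun _ _ => hW _ _ _

theorem Wn_mono (hW : ∀ x s y, 0 ≤ W x s y) (xv : Fin n → X) (sv : Fin n → S)
    {A B : Finset (Fin n → Y)} (hAB : A ⊆ B) : Wn W xv sv A ≤ Wn W xv sv B :=
  sum_le_sum_of_subset_of_nonneg hAB fun _ _ _ => prod_nonneg fun _ _ => hW _ _ _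

theorem Wn_filter_add_Wn_filter_not [Fintype Y] (hW : ∀ x s, ∑ y, W x s y = 1)
    (xv : Fin n → X) (sv : Fin n → S) (p : (Fin n → Y) → Prop) [DecidablePred p] :
    Wn W xv sv (univ.filter p) + Wn W xv sv (univ.filter fun yv => ¬ p yv) = 1 := by
  rw [Wn, Wn, sum_filter_add_sum_filter_not, ← Fintype.prod_sum]
  exact prod_eq_one fun k _ => hW _ _

end ProductChannel

section AuthenticationCode

variable {X Y S Z : Type*} [Fintype X] [Fintype Y]
  {W : X → S → Y → ℝ} {U : X → Z → ℝ} {s₀ : S} {M n : ℕ}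
  {F : Fin M → (Fin n → X) → ℝ} {φ : (Fin n → Y) → Option (Fin M)}

def succProb (W : X → S → Y → ℝ) (s₀ : S) (F : Fin M → (Fin n → X) → ℝ)
    (φ : (Fin n → Y) → Option (Fin M)) (j : Fin M) : ℝ :=
  ∑ xv, F j xv * Wn W xv (fun _ => s₀) (univ.filter fun yv => φ yv = some j)

theorem one_sub_errAvg0 (hW : ∀ x s, ∑ y, W x s y = 1) (hF : ∀ j, ∑ xv, F j xv = 1)
    (hM : M ≠ 0) : 1 - errAvg0 W s₀ F φ = 1 / M * ∑ j, succProb W s₀ F φ j := by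
  have hsucc (j : Fin M) : succProb W s₀ F φ j = 1 - ∑ xv, F j xv *
      Wn W xv (fun _ => s₀) (univ.filter fun yv => φ yv ≠ some j) := by
    rw [← hF j, ← sum_sub_distrib]
    refine sum_congr rfl fun xv _ => ?_
    have := Wn_filter_add_Wn_filter_not hW xv (fun _ => s₀) fun yv => φ yv = some j
    linear_combination F j xv * this
  simp only [errAvg0, hsucc, sum_sub_distrib, sum_const, card_univ, Fintype.card_fin,
    nsmul_eq_mul, mul_one]
  field_simp

theorem sum_Wn_le_errProb_of_isOverwritable [Fintype S] [Fintype Z] [DecidableEq S]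
    {P : X → Z → S → ℝ} (hover : IsOverwritable W U P s₀) (hW : ∀ x s y, 0 ≤ W x s y)
    (hU : ∀ x z, 0 ≤ U x z)
    (hP : ∀ x' z s, 0 ≤ P x' z s) {i : Fin M} (hFi : ∀ xv, 0 ≤ F i xv)
    (hFi_sum : ∑ xv, F i xv = 1) {q : (Fin n → X) → ℝ} (hq : ∀ xv', 0 ≤ q xv') :
    ∑ xv', q xv' * Wn W xv' (fun _ => s₀)
        (univ.filter fun yv => φ yv ≠ some i ∧ φ yv ≠ none)
      ≤ errProb W U s₀ F φ
          (fun zv sv => ∑ xv', q xv' * ∏ k, P (xv' k) (zv k) (sv k)) i := by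
  set B := univ.filter fun yv => φ yv ≠ some i ∧ φ yv ≠ none
  rw [← one_mul (∑ xv', _), ← hFi_sum, sum_mul]
  refine sum_le_sum fun xv _ => mul_le_mul_of_nonneg_left ?_ (hFi xv)
  refine ((hover.pi n).sum_mixture xv q B).symm.trans_le ?_
  gcongr with zv _
  · exact prod_nonneg fun _ _ => hU _ _
  -- in the state `s₀ⁿ` already every output other than `some i` counts as an error
  rw [← add_sum_erase _ _ (mem_univ fun _ => s₀), ← filter_ne']
  refine add_le_add_left (mul_le_mul_of_nonneg_left ?_ ?_) _
  · exact Wn_mono hW _ _ fun yv hyv => by simp_all [B]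
  · exact sum_nonneg fun xv' _ => mul_nonneg (hq xv') (prod_nonneg fun _ _ => hP _ _ _)

theorem sum_succProb_erase_le (hW : ∀ x s y, 0 ≤ W x s y) (hF : ∀ j xv, 0 ≤ F j xv)
    (i : Fin M) :
    1 / M * ∑ j ∈ univ.erase i, succProb W s₀ F φ j
      ≤ ∑ xv', (1 / M * ∑ j, F j xv') * Wn W xv' (fun _ => s₀)
          (univ.filter fun yv => φ yv ≠ some i ∧ φ yv ≠ none) := by
  simp only [sum_mul, mul_assoc, ← mul_sum]
  rw [sum_comm]
  gcongr
  calc ∑ j ∈ univ.erase i, succProb W s₀ F φ j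
      ≤ ∑ j ∈ univ.erase i, ∑ xv', F j xv' * Wn W xv' (fun _ => s₀)
          (univ.filter fun yv => φ yv ≠ some i ∧ φ yv ≠ none) := by
        refine sum_le_sum fun j hj => sum_le_sum fun xv' _ => ?_
        gcongr
        · exact hF j xv'
        · refine Wn_mono hW _ _ fun yv hyv => ?_
          simp_all [eq_comm]
    _ ≤ _ := sum_le_sum_of_subset_of_nonneg (subset_univ _) fun j _ _ =>
        sum_nonneg fun xv' _ => mul_nonneg (hF j xv') (Wn_nonneg hW _ _ _)

end AuthenticationCode

section Stmt18

variable {X Y S Z : Type*}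
variable [Fintype X] [Fintype Y] [Fintype S] [Fintype Z]
variable [DecidableEq Y] [DecidableEq S]

theorem stmt18_general
    (W : X → S → Y → ℝ) (U : X → Z → ℝ) (s₀ : S)
    (hW : ∀ s, IsChannel (fun x y => W x s y)) (hU : IsChannel U)
    (P : X → Z → S → ℝ)
    (hP : ∀ x' z, (∀ s, 0 ≤ P x' z s) ∧ ∑ s, P x' z s = 1)
    (hover : ∀ x x' y, ∑ s, ∑ z, U x z * P x' z s * W x s y = W x' s₀ y)
    (M n : ℕ)
    (F : Fin M → (Fin n → X) → ℝ)
    (hF : ∀ i, (∀ xv, 0 ≤ F i xv) ∧ ∑ xv, F i xv = 1)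
    (φ : (Fin n → Y) → Option (Fin M)) :
    errAvg W U s₀ F φ
        (fun zv sv => (1 / M) * ∑ j, ∑ xv', F j xv' * ∏ k, P (xv' k) (zv k) (sv k))
      ≥ (((M : ℝ) - 1) / M) * (1 - errAvg0 W s₀ F φ) := by
  rcases Nat.eq_zero_or_pos M with rfl | hM
  · simp [errAvg]
  have hW_nonneg : ∀ x s y, 0 ≤ W x s y := fun x s y => (hW s).1 x y
  set q : (Fin n → X) → ℝ := fun xv' => 1 / M * ∑ j, F j xv'
  have hq : ∀ xv', 0 ≤ q xv' := fun xv' =>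
    mul_nonneg (by positivity) (sum_nonneg fun j _ => (hF j).1 xv')
  have hJ : (fun (zv : Fin n → Z) (sv : Fin n → S) =>
        (1 / M : ℝ) * ∑ j, ∑ xv', F j xv' * ∏ k, P (xv' k) (zv k) (sv k))
      = fun zv sv => ∑ xv', q xv' * ∏ k, P (xv' k) (zv k) (sv k) := by
    funext zv sv
    simp only [q, mul_sum, sum_mul, mul_assoc]
    exact sum_comm
  have herr (i : Fin M) : 1 / M * ∑ j ∈ univ.erase i, succProb W s₀ F φ j
      ≤ errProb W U s₀ F φ
          (fun zv sv => 1 / M * ∑ j, ∑ xv', F j xv' * ∏ k, P (xv' k) (zv k) (sv k)) i :=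
    hJ ▸ (sum_succProb_erase_le hW_nonneg (fun j => (hF j).1) i).trans
      (sum_Wn_le_errProb_of_isOverwritable hover hW_nonneg hU.1 (fun x' z => (hP x' z).1)
        (hF i).1 (hF i).2 hq)
  rw [one_sub_errAvg0 (fun x s => (hW s).2 x) (fun j => (hF j).2) hM.ne', ge_iff_le]
  calc ((M : ℝ) - 1) / M * (1 / M * ∑ j, succProb W s₀ F φ j)
      = 1 / M * ∑ i, 1 / M * ∑ j ∈ univ.erase i, succProb W s₀ F φ j := by
        simp only [sum_erase_eq_sub (mem_univ _), ← mul_sum, sum_sub_distrib, sum_const,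
          card_univ, Fintype.card_fin, nsmul_eq_mul]
        ring
    _ ≤ _ := mul_le_mul_of_nonneg_left (sum_le_sum fun i _ => herr i) (by positivity)

/-- If `W` is `U`-overwritable via `P_{S|X',Z}`, then for any
`(M,n)` authentication code with (possibly stochastic) encoder `F` and decoder `φ`,
the adversary strategy `J̃(s⃗|z⃗) = (1/M) ∑_j E_{X'|j}[∏ₖ P(sₖ | X'ₖ, zₖ)]`
drives the average error at least to `((M-1)/M)(1 - e(J_{s₀}))`. -/
theorem stmt18
    (W : X → S → Y → ℝ) (U : X → Z → ℝ) (s₀ : S)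
    (hW : ∀ s, IsChannel (fun x y => W x s y)) (hU : IsChannel U)
    (P : X → Z → S → ℝ)
    (hP : ∀ x' z, (∀ s, 0 ≤ P x' z s) ∧ ∑ s, P x' z s = 1)
    (hover : ∀ x x' y, ∑ s, ∑ z, U x z * P x' z s * W x s y = W x' s₀ y)
    (M n : ℕ) (hM : 0 < M)
    (F : Fin M → (Fin n → X) → ℝ)
    (hF : ∀ i, (∀ xv, 0 ≤ F i xv) ∧ ∑ xv, F i xv = 1)
    (φ : (Fin n → Y) → Option (Fin M)) :
    errAvg W U s₀ F φ
        (fun zv sv => (1 / M) * ∑ j, ∑ xv', F j xv' * ∏ k, P (xv' k) (zv k) (sv k))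
      ≥ (((M : ℝ) - 1) / M) * (1 - errAvg0 W s₀ F φ) :=
  stmt18_general W U s₀ hW hU P hP hover M n F hF φ

end Stmt18
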